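/- arXiv:1302.6261 — 6 statements merged into one kernel-verified Lean document; each statement's English description precedes it below -/
import Mathlib

section
/- Let n ≥ 1 and let σ = (σ₁, ..., σ_r) be an orbit of multiplication-by-2 on (ℤ/(2^n+1)) \ {0}, listed cyclically with σ_{i+1} ≡ 2σ_i (mod 2^n+1), with representatives taken in {1, ..., 2^n}. Call σ_i a local maximum if σ_{i−1} < σ_i > σ_{i+1} (indices mod r) and a local minimum if σ_{i−1} > σ_i < σ_{i+1}. Then the number of local maxima equals the number of local minima, and this common number (the a-number of σ) is odd. -/
private lemma split_count (P : ℕ → Prop) [DecidablePred P] (s : ℕ) :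
    ∀ t, ((Finset.range (s + t)).filter P).card
      = ((Finset.range s).filter P).card
        + ((Finset.range t).filter fun j => P (s + j)).card := by
  intro t
  induction t with
  | zero => simp
  | succ l ih =>
    rw [show s + (l + 1) = (s + l) + 1 by omega, Finset.range_add_one, Finset.range_add_one,
      Finset.filter_insert, Finset.filter_insert]
    by_cases h : P (s + l)
    · rw [if_pos h, if_pos h, Finset.card_insert_of_notMem (by simp),
        Finset.card_insert_of_notMem (by simp), ih]
      omega
    · rw [if_neg h, if_neg h, ih]

private lemma balance (F : ℕ → Bool) (a : ℕ) :
    ∀ len, (((Finset.range len).filter fun j => F (a + j) = false ∧ F (a + j + 1) = true).card : ℤ)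
        + (if F a then 1 else 0)
      = (((Finset.range len).filter fun j => F (a + j) = true ∧ F (a + j + 1) = false).card : ℤ)
        + (if F (a + len) then 1 else 0) := by
  intro len
  induction len with
  | zero => simp
  | succ l ih =>
    rw [Finset.range_add_one, Finset.filter_insert, Finset.filter_insert,
      show a + (l + 1) = (a + l) + 1 by omega]
    cases h1 : F (a + l) <;> cases h2 : F (a + l + 1) <;>
      simp only [h1, h2, and_self, and_false, false_and, true_and, and_true,
        Bool.true_eq_false, Bool.false_eq_true, if_true, if_false, not_false_iff,
        if_pos, if_neg] at ih ⊢ <;>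
    first
      | (rw [Finset.card_insert_of_notMem (by simp)]; push_cast at ih ⊢; omega)
      | (push_cast at ih ⊢; omega)

/-- For an orbit of ×2 on (ℤ/(2^n+1)) \ {0}, listed cyclically with
representatives in {1, ..., 2^n}, the number of local maxima equals the
number of local minima, and this common number (the a-number) is odd. -/
theorem stmt_8 (n r : ℕ) (hn : 1 ≤ n) (hr : 0 < r)
    (σ : ZMod r → ℕ)
    (hrange : ∀ i, 1 ≤ σ i ∧ σ i ≤ 2 ^ n)
    (hinj : Function.Injective σ)
    (hdouble : ∀ i, ((σ (i + 1) : ℕ) : ZMod (2 ^ n + 1))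
        = 2 * ((σ i : ℕ) : ZMod (2 ^ n + 1))) :
    Set.ncard {i : ZMod r | σ (i - 1) < σ i ∧ σ (i + 1) < σ i}
        = Set.ncard {i : ZMod r | σ i < σ (i - 1) ∧ σ i < σ (i + 1)} ∧
    Odd (Set.ncard {i : ZMod r | σ (i - 1) < σ i ∧ σ (i + 1) < σ i}) := by
  classical
  haveI : NeZero r := ⟨hr.ne'⟩
  haveI : NeZero (2^n+1) := ⟨by positivity⟩
  have h2le : (2:ℕ) ≤ 2^n := by
    calc (2:ℕ) = 2^1 := rfl
    _ ≤ 2^n := Nat.pow_le_pow_right (by norm_num) hn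
  have h2dvd : 2 ∣ 2^n := dvd_pow_self 2 (by omega : n ≠ 0)
  have h2neg : ((2:ZMod (2^n+1)))^n = -1 := by
    have h0 : ((2^n+1 : ℕ) : ZMod (2^n+1)) = 0 := ZMod.natCast_self _
    push_cast at h0
    exact eq_neg_of_add_eq_zero_left h0
  have hshift : ∀ (i : ZMod r) (k : ℕ),
      ((σ (i + (k : ZMod r)) : ℕ) : ZMod (2^n+1)) = 2^k * ((σ i : ℕ) : ZMod (2^n+1)) := by
    intro i k
    induction k with
    | zero => simp
    | succ l ih =>
      have e : (((l+1:ℕ)) : ZMod r) = (l : ZMod r) + 1 := by push_cast; ring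
      rw [e, ← add_assoc, hdouble, ih]; ring
  have hneg : ∀ i : ZMod r, σ (i + ((n:ℕ) : ZMod r)) = 2^n + 1 - σ i := by
    intro i
    have h1 := hshift i n
    rw [h2neg] at h1
    have hle : σ i ≤ 2^n + 1 := le_trans (hrange i).2 (by omega)
    have hb : ((2^n + 1 - σ i : ℕ) : ZMod (2^n+1)) = -((σ i : ℕ) : ZMod (2^n+1)) := by
      rw [Nat.cast_sub hle]
      push_cast
      rw [h2neg]
      ring
    have ha : σ (i + ((n:ℕ):ZMod r)) < 2^n + 1 := by have := (hrange (i + ((n:ℕ):ZMod r))).2; omega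
    have hb' : 2^n + 1 - σ i < 2^n + 1 := by have := (hrange i).1; omega
    have h2 : ((σ (i + ((n:ℕ):ZMod r)) : ℕ) : ZMod (2^n+1)) = ((2^n+1 - σ i : ℕ) : ZMod (2^n+1)) := by
      rw [h1, hb]; ring
    calc σ (i + ((n:ℕ):ZMod r)) = ((σ (i + ((n:ℕ):ZMod r)) : ℕ) : ZMod (2^n+1)).val :=
          (ZMod.val_cast_of_lt ha).symm
      _ = ((2^n+1 - σ i : ℕ) : ZMod (2^n+1)).val := by rw [h2]
      _ = 2^n+1 - σ i := ZMod.val_cast_of_lt hb'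
  have hν : ((n:ℕ) : ZMod r) ≠ 0 := by
    intro h
    have h1 := hneg 0
    rw [h, add_zero] at h1
    have h2 := (hrange 0).1
    have h3 := (hrange 0).2
    omega
  set ν := ((n:ℕ) : ZMod r) with hνdef
  set v := ν.val with hvdef
  have hvr : v < r := ZMod.val_lt ν
  have hv0 : v ≠ 0 := fun h => hν ((ZMod.val_eq_zero ν).mp h)
  have hcast_v : ((v:ℕ) : ZMod r) = ν := ZMod.natCast_rightInverse ν
  have hνν : ν + ν = 0 := by
    have hp : σ (0 + ν + ν) = σ 0 := by
      rw [hneg, hneg]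
      have h1 := (hrange 0).1
      have h2 := (hrange 0).2
      omega
    simpa using hinj hp
  have h2v : ((2*v : ℕ) : ZMod r) = 0 := by
    push_cast [hcast_v]
    rw [two_mul]
    exact hνν
  have hdvd : r ∣ 2 * v := (ZMod.natCast_eq_zero_iff _ _).mp h2v
  have hrv : r = 2 * v := by
    obtain ⟨c, hc⟩ := hdvd
    have hcle : c < 2 := by
      by_contra hcc
      push_neg at hcc
      have : r * 2 ≤ r * c := Nat.mul_le_mul_left r hcc
      omega
    interval_cases c <;> omega
  -- the descent indicator
  set F : ℕ → Bool := fun k => decide (σ ((k:ZMod r) + 1) < σ (k : ZMod r)) with hFdef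
  have hdist : ∀ i : ZMod r, σ i ≠ σ (i+1) := by
    intro i h
    have h1 : i = i + 1 := hinj h
    have h2 : (0 : ZMod r) = 1 := by
      have h3 : i + 0 = i + 1 := by simpa using h1
      exact add_left_cancel h3
    have h4 : ((1:ℕ) : ZMod r) = 0 := by
      rw [Nat.cast_one]
      exact h2.symm
    have h5 := Nat.le_of_dvd one_pos ((ZMod.natCast_eq_zero_iff 1 r).mp h4)
    omega
  have hFflip : ∀ k, F (k + v) = ! F k := by
    intro k
    have e1 : ((k + v : ℕ) : ZMod r) = (k : ZMod r) + ν := by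
      push_cast
      rw [hcast_v]
    have e2 : σ ((k:ZMod r) + ν) = 2^n + 1 - σ (k:ZMod r) := hneg _
    have e3 : σ (((k:ZMod r) + ν) + 1) = 2^n + 1 - σ ((k:ZMod r)+1) := by
      rw [show (k:ZMod r) + ν + 1 = ((k:ZMod r)+1) + ν by ring]
      exact hneg _
    have hb1 := (hrange (k:ZMod r)).1
    have hb2 := (hrange (k:ZMod r)).2
    have hb3 := (hrange ((k:ZMod r)+1)).1
    have hb4 := (hrange ((k:ZMod r)+1)).2
    have hne := hdist (k:ZMod r)
    have hiff : (σ (((k:ZMod r)+ν) + 1) < σ ((k:ZMod r)+ν))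
        ↔ ¬ (σ ((k:ZMod r)+1) < σ (k:ZMod r)) := by
      rw [e2, e3]
      omega
    simp only [hFdef]
    rw [e1]
    rw [decide_eq_decide.mpr hiff, decide_not]
  set P : ℕ → Prop := fun k => F k = false ∧ F (k+1) = true with hPdef
  set Q : ℕ → Prop := fun k => F k = true ∧ F (k+1) = false with hQdef
  have hcastsucc : ∀ k : ℕ, (((k+1:ℕ)) : ZMod r) = (k : ZMod r) + 1 := by
    intro k; push_cast; ring
  have hMax : {i : ZMod r | σ (i - 1) < σ i ∧ σ (i + 1) < σ i}.ncard
      = ((Finset.range r).filter P).card := by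
    have hset : {i : ZMod r | σ (i - 1) < σ i ∧ σ (i + 1) < σ i}
        = ↑(Finset.univ.filter fun i : ZMod r => σ (i - 1) < σ i ∧ σ (i + 1) < σ i) := by
      ext i; simp
    rw [hset, Set.ncard_coe_finset]
    symm
    refine Finset.card_bij' (fun k _ => (k : ZMod r) + 1) (fun i _ => (i - 1).val) ?_ ?_ ?_ ?_
    · intro k hk
      simp only [Finset.mem_filter, Finset.mem_range, hPdef, hFdef,
        decide_eq_true_eq, decide_eq_false_iff_not] at hk
      obtain ⟨hkr, hk1, hk2⟩ := hk
      rw [hcastsucc] at hk2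
      simp only [Finset.mem_filter, Finset.mem_univ, true_and, add_sub_cancel_right]
      exact ⟨lt_of_le_of_ne (not_lt.mp hk1) (hdist _), hk2⟩
    · intro i hi
      simp only [Finset.mem_filter, Finset.mem_univ, true_and] at hi
      have hval : (((i-1).val : ℕ) : ZMod r) = i - 1 := ZMod.natCast_rightInverse _
      simp only [Finset.mem_filter, Finset.mem_range, hPdef, hFdef,
        decide_eq_true_eq, decide_eq_false_iff_not]
      refine ⟨ZMod.val_lt _, ?_, ?_⟩
      · rw [hval, sub_add_cancel]
        exact not_lt.mpr (le_of_lt hi.1)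
      · rw [hcastsucc, hval, sub_add_cancel]
        exact hi.2
    · intro k hk
      simp only [Finset.mem_filter, Finset.mem_range] at hk
      show (((k : ZMod r) + 1) - 1).val = k
      rw [add_sub_cancel_right]
      exact ZMod.val_cast_of_lt hk.1
    · intro i hi
      have hval : (((i-1).val : ℕ) : ZMod r) = i - 1 := ZMod.natCast_rightInverse _
      show (((i - 1).val : ℕ) : ZMod r) + 1 = i
      rw [hval, sub_add_cancel]
  have hMin : {i : ZMod r | σ i < σ (i - 1) ∧ σ i < σ (i + 1)}.ncard
      = ((Finset.range r).filter Q).card := by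
    have hset : {i : ZMod r | σ i < σ (i - 1) ∧ σ i < σ (i + 1)}
        = ↑(Finset.univ.filter fun i : ZMod r => σ i < σ (i - 1) ∧ σ i < σ (i + 1)) := by
      ext i; simp
    rw [hset, Set.ncard_coe_finset]
    symm
    refine Finset.card_bij' (fun k _ => (k : ZMod r) + 1) (fun i _ => (i - 1).val) ?_ ?_ ?_ ?_
    · intro k hk
      simp only [Finset.mem_filter, Finset.mem_range, hQdef, hFdef,
        decide_eq_true_eq, decide_eq_false_iff_not] at hk
      obtain ⟨hkr, hk1, hk2⟩ := hk
      rw [hcastsucc] at hk2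
      simp only [Finset.mem_filter, Finset.mem_univ, true_and, add_sub_cancel_right]
      exact ⟨hk1, lt_of_le_of_ne (not_lt.mp hk2) (hdist _)⟩
    · intro i hi
      simp only [Finset.mem_filter, Finset.mem_univ, true_and] at hi
      have hval : (((i-1).val : ℕ) : ZMod r) = i - 1 := ZMod.natCast_rightInverse _
      simp only [Finset.mem_filter, Finset.mem_range, hQdef, hFdef,
        decide_eq_true_eq, decide_eq_false_iff_not]
      refine ⟨ZMod.val_lt _, ?_, ?_⟩
      · rw [hval, sub_add_cancel]
        exact hi.1
      · rw [hcastsucc, hval, sub_add_cancel]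
        exact not_lt.mpr (le_of_lt hi.2)
    · intro k hk
      simp only [Finset.mem_filter, Finset.mem_range] at hk
      show (((k : ZMod r) + 1) - 1).val = k
      rw [add_sub_cancel_right]
      exact ZMod.val_cast_of_lt hk.1
    · intro i hi
      have hval : (((i-1).val : ℕ) : ZMod r) = i - 1 := ZMod.natCast_rightInverse _
      show (((i - 1).val : ℕ) : ZMod r) + 1 = i
      rw [hval, sub_add_cancel]
  have hflipfilter : ((Finset.range v).filter fun j => P (v + j)) = (Finset.range v).filter Q := by
    apply Finset.filter_congr
    intro j _
    simp only [hPdef, hQdef]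
    rw [show v + j = j + v by omega, hFflip j, show j + v + 1 = (j+1) + v by omega, hFflip (j+1)]
    simp
  have hFv : F v = ! F 0 := by simpa using hFflip 0
  have hFr : F r = F 0 := by
    have h1 : F (v + v) = ! F v := hFflip v
    rw [hrv, two_mul, h1, hFv, Bool.not_not]
  have hbalr : (((Finset.range r).filter P).card : ℤ) + (if F 0 then 1 else 0)
      = (((Finset.range r).filter Q).card : ℤ) + (if F (0 + r) then 1 else 0) := by
    have := balance F 0 r
    simpa using this
  have hbalv : (((Finset.range v).filter P).card : ℤ) + (if F 0 then 1 else 0)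
      = (((Finset.range v).filter Q).card : ℤ) + (if F (0 + v) then 1 else 0) := by
    have := balance F 0 v
    simpa using this
  rw [Nat.zero_add, hFr] at hbalr
  rw [Nat.zero_add, hFv] at hbalv
  have hEq : ((Finset.range r).filter P).card = ((Finset.range r).filter Q).card := by
    cases hF0 : F 0 <;> rw [hF0] at hbalr <;> simp at hbalr <;> exact_mod_cast hbalr
  have hsum : ((Finset.range r).filter P).card
      = ((Finset.range v).filter P).card + ((Finset.range v).filter Q).card := by
    rw [hrv, two_mul, split_count P v v, hflipfilter]
  have hOdd : Odd ((Finset.range r).filter P).card := by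
    rw [hsum, Nat.odd_iff]
    cases hF0 : F 0 <;> rw [hF0] at hbalv <;> simp at hbalv <;> omega
  refine ⟨?_, ?_⟩
  · rw [hMax, hMin, hEq]
  · rw [hMax]
    exact hOdd
end

section
/- Suppose n = ck with k odd and c ≥ 1, and let L = (2^n + 1)/(2^c + 1). Then L is an integer, and the map α ↦ L·α induces an injective group homomorphism ℤ/(2^c+1) → ℤ/(2^n+1) which induces a bijection between orbits of multiplication-by-2 on (ℤ/(2^c+1)) \ {0} and orbits of multiplication-by-2 on (L·ℤ/(2^n+1)) \ {0}. -/
/-- Lemma 5.6 of the paper: for n = ck with k odd, L = (2^n+1)/(2^c+1) is an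
integer and α ↦ L·α gives an injective additive map ℤ/(2^c+1) → ℤ/(2^n+1)
inducing a bijection between ×2-orbits of nonzero elements and ×2-orbits of
nonzero multiples of L. -/
theorem stmt_9 (c k n : ℕ) (hc : 1 ≤ c) (hk : Odd k) (hn : n = c * k) :
    (2 ^ c + 1) ∣ (2 ^ n + 1) ∧
    ∀ L, L = (2 ^ n + 1) / (2 ^ c + 1) →
      Function.Injective
          (fun α : ZMod (2 ^ c + 1) => ((L * α.val : ℕ) : ZMod (2 ^ n + 1))) ∧
      (∀ α β : ZMod (2 ^ c + 1),
          ((L * (α + β).val : ℕ) : ZMod (2 ^ n + 1))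
            = ((L * α.val : ℕ) : ZMod (2 ^ n + 1))
              + ((L * β.val : ℕ) : ZMod (2 ^ n + 1))) ∧
      (∀ α β : ZMod (2 ^ c + 1),
          (∃ i : ℕ, β = 2 ^ i * α) ↔
            (∃ i : ℕ, ((L * β.val : ℕ) : ZMod (2 ^ n + 1))
              = 2 ^ i * ((L * α.val : ℕ) : ZMod (2 ^ n + 1)))) ∧
      (∀ s : ZMod (2 ^ n + 1),
          (∃ α : ZMod (2 ^ c + 1), ((L * α.val : ℕ) : ZMod (2 ^ n + 1)) = s) ↔
            ((L : ℕ) : ZMod (2 ^ n + 1)) ∣ s) := by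
  set M := 2 ^ c + 1 with hM
  set N := 2 ^ n + 1 with hN
  have hdvd : M ∣ N := by
    have : 2 ^ n = (2 ^ c) ^ k := by rw [hn, pow_mul]
    rw [hN, hM, this]
    simpa using Odd.nat_add_dvd_pow_add_pow (2 ^ c) 1 hk
  refine ⟨hdvd, ?_⟩
  intro L hL
  have hLM : L * M = N := by rw [hL]; exact Nat.div_mul_cancel hdvd
  have hL0 : L ≠ 0 := by
    rintro rfl
    rw [zero_mul, hN] at hLM
    exact Nat.succ_ne_zero _ hLM.symm
  -- key modular arithmetic facts
  have key : ∀ a b : ℕ, a ≡ b [MOD M] ↔ L * a ≡ L * b [MOD N] := by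
    intro a b
    rw [← hLM, Nat.ModEq.mul_left_cancel_iff' hL0]
  have cast_iff : ∀ a b : ℕ, ((a : ℕ) : ZMod N) = (b : ZMod N) ↔ a ≡ b [MOD N] :=
    fun a b => ZMod.natCast_eq_natCast_iff a b N
  have valM : ∀ α : ZMod M, ∀ a : ℕ, α = (a : ZMod M) ↔ α.val ≡ a [MOD M] := by
    intro α a
    rw [show α = (α.val : ZMod M) by simp [ZMod.natCast_val, ZMod.cast_id]]
    constructor
    · intro h
      exact (ZMod.natCast_eq_natCast_iff _ _ _).mp (by simpa using h)
    · intro h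
      exact_mod_cast (ZMod.natCast_eq_natCast_iff _ _ _).mpr (by simpa using h)
  constructor
  · -- injectivity
    intro α β h
    simp only at h
    have h' : L * α.val ≡ L * β.val [MOD N] := (cast_iff _ _).mp h
    have hlt : ∀ γ : ZMod M, L * γ.val < N := by
      intro γ
      rw [← hLM]
      exact Nat.mul_lt_mul_of_le_of_lt (le_refl L) (ZMod.val_lt γ) (Nat.pos_of_ne_zero hL0)
    have := Nat.ModEq.eq_of_lt_of_lt h' (hlt α) (hlt β)
    have := Nat.eq_of_mul_eq_mul_left (Nat.pos_of_ne_zero hL0) this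
    exact ZMod.val_injective M this
  refine ⟨?_, ?_, ?_⟩
  · -- additivity
    intro α β
    have h1 : (α + β).val ≡ α.val + β.val [MOD M] := by
      rw [ZMod.val_add]; exact (Nat.mod_modEq _ _)
    have h2 : L * (α + β).val ≡ L * (α.val + β.val) [MOD N] := (key _ _).mp h1
    have := (cast_iff _ _).mpr h2
    rw [this]
    push_cast
    ring
  · -- orbit correspondence
    intro α β
    constructor
    · rintro ⟨i, hi⟩
      refine ⟨i, ?_⟩
      have hβ : β.val ≡ 2 ^ i * α.val [MOD M] := by
        have := (valM β (2 ^ i * α.val)).mp (by push_cast; simp [hi, ZMod.natCast_val, ZMod.cast_id])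
        exact this
      have := (cast_iff _ _).mpr ((key _ _).mp hβ)
      rw [this]
      push_cast
      ring
    · rintro ⟨i, hi⟩
      refine ⟨i, ?_⟩
      have hi' : ((L * β.val : ℕ) : ZMod N) = ((2 ^ i * (L * α.val) : ℕ) : ZMod N) := by
        rw [hi]; push_cast; ring
      have h' : L * β.val ≡ L * (2 ^ i * α.val) [MOD N] := by
        have := (cast_iff _ _).mp hi'
        calc L * β.val ≡ 2 ^ i * (L * α.val) [MOD N] := this
          _ = L * (2 ^ i * α.val) := by ring
      have hβ : β.val ≡ 2 ^ i * α.val [MOD M] := (key _ _).mpr h'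
      have := (valM β (2 ^ i * α.val)).mpr hβ
      rw [this]
      push_cast
      simp [ZMod.natCast_val, ZMod.cast_id]
  · -- image = multiples of L
    intro s
    constructor
    · rintro ⟨α, hα⟩
      exact ⟨(α.val : ZMod N), by rw [← hα]; push_cast; ring⟩
    · rintro ⟨t, rfl⟩
      refine ⟨(t.val : ZMod M), ?_⟩
      have hv : ((t.val : ZMod M)).val ≡ t.val [MOD M] := by
        rw [ZMod.val_natCast]; exact Nat.mod_modEq _ _
      have := (cast_iff _ _).mpr ((key _ _).mp hv)
      rw [this]
      push_cast
      simp [ZMod.natCast_val, ZMod.cast_id]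
end

section
/- Let n ≥ 1 and suppose σ is an orbit of multiplication-by-2 on (ℤ/(2^n+1)) \ {0} with |σ| = 2c < 2n. Then c divides n, n/c is odd, and σ = L·σ' for some orbit σ' of multiplication-by-2 on (ℤ/(2^c+1)) \ {0}, where L = (2^n+1)/(2^c+1). -/
/-- Lemma 5.7 of the paper: a short orbit of ×2 on (ℤ/(2^n+1)) \ {0} of length
2c < 2n comes from an orbit of ×2 on (ℤ/(2^c+1)) \ {0} via multiplication by
L = (2^n+1)/(2^c+1), and n/c is an odd integer. -/
theorem stmt_10 (n c : ℕ) (hn : 1 ≤ n) (t : ZMod (2 ^ n + 1)) (ht : t ≠ 0)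
    (hcard : Set.ncard {s : ZMod (2 ^ n + 1) | ∃ i : ℕ, s = 2 ^ i * t} = 2 * c)
    (hshort : 2 * c < 2 * n) :
    c ∣ n ∧ Odd (n / c) ∧
    ∃ t' : ZMod (2 ^ c + 1), t' ≠ 0 ∧
      {s : ZMod (2 ^ n + 1) | ∃ i : ℕ, s = 2 ^ i * t}
        = (fun α : ZMod (2 ^ c + 1) =>
              ((((2 ^ n + 1) / (2 ^ c + 1)) * α.val : ℕ) : ZMod (2 ^ n + 1))) ''
            {s' : ZMod (2 ^ c + 1) | ∃ i : ℕ, s' = 2 ^ i * t'} := by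
  haveI : NeZero (2 ^ n + 1) := ⟨by positivity⟩
  haveI : NeZero (2 ^ c + 1) := ⟨by positivity⟩
  -- 2^n = -1
  have h2n : (2 : ZMod (2 ^ n + 1)) ^ n = -1 := by
    have h0 : ((2 ^ n + 1 : ℕ) : ZMod (2 ^ n + 1)) = 0 := ZMod.natCast_self _
    push_cast at h0
    exact eq_neg_of_add_eq_zero_left h0
  set f : ZMod (2 ^ n + 1) → ZMod (2 ^ n + 1) := fun s => 2 * s with hf
  have hiter : ∀ (i : ℕ) (s : ZMod (2 ^ n + 1)), f^[i] s = 2 ^ i * s := by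
    intro i
    induction i with
    | zero => intro s; simp
    | succ i ih =>
        intro s
        rw [Function.iterate_succ_apply', ih]
        show 2 * (2 ^ i * s) = 2 ^ (i + 1) * s
        rw [pow_succ]
        ring
  have hp : Function.IsPeriodicPt f (2 * n) t := by
    show f^[2 * n] t = t
    rw [hiter, mul_comm 2 n, pow_mul, h2n]
    ring
  set d := Function.minimalPeriod f t with hdd
  have hd0 : 0 < d := Function.IsPeriodicPt.minimalPeriod_pos (by omega) hp
  have hdvd2n : d ∣ 2 * n := hp.minimalPeriod_dvd
  -- orbit = image of Iio d
  have hset : {s : ZMod (2 ^ n + 1) | ∃ i : ℕ, s = 2 ^ i * t}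
      = (fun i => f^[i] t) '' Set.Iio d := by
    ext s
    constructor
    · rintro ⟨i, rfl⟩
      refine ⟨i % d, Nat.mod_lt _ hd0, ?_⟩
      show f^[i % d] t = 2 ^ i * t
      rw [Function.iterate_mod_minimalPeriod_eq, hiter]
    · rintro ⟨i, _, rfl⟩
      refine ⟨i, ?_⟩
      show f^[i] t = 2 ^ i * t
      exact hiter i t
  have hncard : Set.ncard {s : ZMod (2 ^ n + 1) | ∃ i : ℕ, s = 2 ^ i * t} = d := by
    rw [hset, Set.ncard_image_of_injOn Function.iterate_injOn_Iio_minimalPeriod,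
      ← Finset.coe_range, Set.ncard_coe_finset, Finset.card_range]
  have hd : d = 2 * c := hncard.symm.trans hcard
  have hc0 : 0 < c := by omega
  have hcn : c ∣ n := by
    rcases hdvd2n with ⟨q, hq⟩
    refine ⟨q, ?_⟩
    have h2 : 2 * n = 2 * (c * q) := by rw [hq, hd]; ring
    exact Nat.eq_of_mul_eq_mul_left (by norm_num) h2
  set k := n / c with hkk
  have hk : c * k = n := Nat.mul_div_cancel' hcn
  -- d ∣ e → 2^e t = t
  have hdt : ∀ q : ℕ, (2 : ZMod (2 ^ n + 1)) ^ (d * q) * t = t := by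
    intro q
    have : Function.IsPeriodicPt f (d * q) t :=
      (Function.isPeriodicPt_minimalPeriod f t).mul_const q
    rw [← hiter]; exact this
  have h2u : IsUnit (2 : ZMod (2 ^ n + 1)) := by
    have : ((2 : ℕ) : ZMod (2 ^ n + 1)) = 2 := by push_cast; ring
    rw [← this, ZMod.isUnit_iff_coprime]
    have : Odd (2 ^ n + 1) := by
      refine Even.add_one ?_
      exact (Nat.even_pow' (by omega)).mpr even_two
    exact this.coprime_two_left
  have h2nt : (2 : ZMod (2 ^ n + 1)) ^ n * t = -t := by rw [h2n]; ring
  have hkodd : Odd k := by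
    rw [Nat.odd_iff]
    by_contra h
    have hke : k % 2 = 0 := by omega
    obtain ⟨j, hj⟩ := (Nat.even_iff.mpr hke)
    have hn' : n = d * j := by rw [hd, ← hk, hj]; ring
    have ht2 : (2 : ZMod (2 ^ n + 1)) ^ (d * j) * t = t := hdt j
    rw [← hn'] at ht2
    have hteq : t = -t := ht2.symm.trans h2nt
    have h2t : (2 : ZMod (2 ^ n + 1)) * t = 0 := by linear_combination hteq
    exact ht (h2u.mul_right_eq_zero.mp h2t)
  refine ⟨hcn, hkodd, ?_⟩
  -- 2^c t = -t
  have hct : (2 : ZMod (2 ^ n + 1)) ^ c * t = -t := by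
    obtain ⟨j, hj⟩ := hkodd
    have hn' : n = d * j + c := by rw [hd, ← hk, hj]; ring
    have h4 : (2 : ZMod (2 ^ n + 1)) ^ c * t = 2 ^ (d * j + c) * t := by
      calc (2 : ZMod (2 ^ n + 1)) ^ c * t = 2 ^ c * (2 ^ (d * j) * t) := by rw [hdt]
      _ = 2 ^ (d * j + c) * t := by rw [pow_add]; ring
    rw [← hn'] at h4
    exact h4.trans h2nt
  have hc1t : ((2 ^ c + 1 : ℕ) : ZMod (2 ^ n + 1)) * t = 0 := by
    push_cast
    rw [add_mul, hct]; ring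
  -- divisibility 2^c+1 ∣ 2^n+1
  have hdvdM : 2 ^ c + 1 ∣ 2 ^ n + 1 := by
    have h := Odd.nat_add_dvd_pow_add_pow (2 ^ c) 1 hkodd
    rw [one_pow, ← pow_mul, hk] at h
    exact h
  set L := (2 ^ n + 1) / (2 ^ c + 1) with hLL
  have hML : (2 ^ c + 1) * L = 2 ^ n + 1 := Nat.mul_div_cancel' hdvdM
  have hL0 : 0 < L :=
    Nat.div_pos (Nat.le_of_dvd (by positivity) hdvdM) (by positivity)
  have hMd : (2 ^ n + 1) ∣ (2 ^ c + 1) * t.val := by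
    rw [← ZMod.natCast_eq_zero_iff]
    push_cast
    rw [ZMod.natCast_val, ZMod.cast_id]
    have := hc1t; push_cast at this; exact this
  have hLt : L ∣ t.val := by
    have h1 : (2 ^ c + 1) * L ∣ (2 ^ c + 1) * t.val := by rw [hML]; exact hMd
    exact (mul_dvd_mul_iff_left (by positivity : (2:ℕ) ^ c + 1 ≠ 0)).mp h1
  set v := t.val / L with hvv
  have hv : L * v = t.val := Nat.mul_div_cancel' hLt
  have hvlt : v < 2 ^ c + 1 := by
    have h3 : L * v < L * (2 ^ c + 1) := by
      rw [hv, mul_comm L, hML]; exact ZMod.val_lt t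
    exact Nat.lt_of_mul_lt_mul_left h3
  have hv0 : v ≠ 0 := by
    intro h
    apply ht
    have : t.val = 0 := by rw [← hv, h, mul_zero]
    exact (ZMod.val_eq_zero t).mp this
  refine ⟨(v : ZMod (2 ^ c + 1)), ?_, ?_⟩
  · intro h
    rw [ZMod.natCast_eq_zero_iff] at h
    have := Nat.le_of_dvd (Nat.pos_of_ne_zero hv0) h
    omega
  · have hkey : ∀ i : ℕ,
        ((L * ((2 : ZMod (2 ^ c + 1)) ^ i * (v : ZMod (2 ^ c + 1))).val : ℕ)
          : ZMod (2 ^ n + 1)) = 2 ^ i * t := by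
      intro i
      have h1 : ((2 : ZMod (2 ^ c + 1)) ^ i * (v : ZMod (2 ^ c + 1))).val
          = (2 ^ i * v) % (2 ^ c + 1) := by
        have h2 : (2 : ZMod (2 ^ c + 1)) ^ i * (v : ZMod (2 ^ c + 1))
            = ((2 ^ i * v : ℕ) : ZMod (2 ^ c + 1)) := by push_cast; ring
        rw [h2, ZMod.val_natCast]
      rw [h1]
      have h2 : L * (2 ^ i * v % (2 ^ c + 1)) ≡ L * (2 ^ i * v) [MOD 2 ^ n + 1] := by
        have := (Nat.mod_modEq (2 ^ i * v) (2 ^ c + 1)).mul_left' (c := L)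
        rwa [show L * (2 ^ c + 1) = 2 ^ n + 1 by rw [mul_comm]; exact hML] at this
      calc ((L * (2 ^ i * v % (2 ^ c + 1)) : ℕ) : ZMod (2 ^ n + 1))
          = ((L * (2 ^ i * v) : ℕ) : ZMod (2 ^ n + 1)) :=
            (ZMod.natCast_eq_natCast_iff _ _ _).mpr h2
        _ = ((2 ^ i * t.val : ℕ) : ZMod (2 ^ n + 1)) := by
            rw [show L * (2 ^ i * v) = 2 ^ i * (L * v) by ring, hv]
        _ = 2 ^ i * t := by
            push_cast
            rw [ZMod.natCast_val, ZMod.cast_id]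
    ext s
    constructor
    · rintro ⟨i, rfl⟩
      exact ⟨2 ^ i * (v : ZMod (2 ^ c + 1)), ⟨i, rfl⟩, hkey i⟩
    · rintro ⟨s', ⟨i, rfl⟩, rfl⟩
      refine ⟨i, ?_⟩
      beta_reduce
      exact_mod_cast hkey i
end

section
/- Let n ≥ 1. If n is a power of 2 (n = 2^e for some e ≥ 0), then every orbit of multiplication-by-2 on (ℤ/(2^n+1)) \ {0} has length exactly 2n. -/
/-- If n is a power of 2, every orbit of ×2 on (ℤ/(2^n+1)) \ {0} has length
exactly 2n. -/
theorem stmt_11 (n e : ℕ) (hn : 1 ≤ n) (he : n = 2 ^ e)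
    (t : ZMod (2 ^ n + 1)) (ht : t ≠ 0) :
    Set.ncard {s : ZMod (2 ^ n + 1) | ∃ i : ℕ, s = 2 ^ i * t} = 2 * n := by
  have hNodd : ¬ 2 ∣ (2 ^ n + 1) := by
    have : 2 ∣ 2 ^ n := dvd_pow_self 2 (by omega)
    omega
  have hv0 : t.val ≠ 0 := fun h => ht ((ZMod.val_eq_zero t).1 h)
  have hvN : t.val < 2 ^ n + 1 := ZMod.val_lt t
  obtain ⟨v, hv⟩ : ∃ v, v = t.val := ⟨_, rfl⟩
  obtain ⟨g, hg⟩ : ∃ g, g = Nat.gcd (2 ^ n + 1) v := ⟨_, rfl⟩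
  have hgdvdN : g ∣ 2 ^ n + 1 := hg ▸ Nat.gcd_dvd_left _ _
  have hgdvdv : g ∣ v := hg ▸ Nat.gcd_dvd_right _ _
  have hg0 : 0 < g := hg ▸ Nat.gcd_pos_of_pos_right _ (by omega)
  obtain ⟨d, hdd⟩ : ∃ d, d = (2 ^ n + 1) / g := ⟨_, rfl⟩
  have hNd : 2 ^ n + 1 = g * d := by rw [hdd]; exact (Nat.mul_div_cancel' hgdvdN).symm
  obtain ⟨u, huu⟩ : ∃ u, u = v / g := ⟨_, rfl⟩
  have hvgu : v = g * u := by rw [huu]; exact (Nat.mul_div_cancel' hgdvdv).symm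
  have hd1 : 1 < d := by
    have hgle : g ≤ v := Nat.le_of_dvd (by omega) hgdvdv
    rcases Nat.lt_or_ge d 2 with h | h
    · interval_cases d <;> omega
    · omega
  haveI : Fact (1 < d) := ⟨hd1⟩
  have hddvdN : d ∣ 2 ^ n + 1 := ⟨g, by rw [hNd]; ring⟩
  have hdodd : ¬ 2 ∣ d := fun h2 => hNodd (h2.trans hddvdN)
  have hco2 : Nat.Coprime 2 d := (Nat.prime_two.coprime_iff_not_dvd).2 hdodd
  have htv : t = (v : ZMod (2 ^ n + 1)) := by
    rw [hv, ZMod.natCast_val, ZMod.cast_id]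
  -- Key equivalence: 2^a t = 2^b t in ZMod (2^n+1) iff 2^a = 2^b in ZMod d
  have key : ∀ a b : ℕ,
      ((2 : ZMod (2 ^ n + 1)) ^ a * t = 2 ^ b * t) ↔ ((2 : ZMod d) ^ a = 2 ^ b) := by
    intro a b
    have h1 : ((2 : ZMod (2 ^ n + 1)) ^ a * t = 2 ^ b * t) ↔
        (2 ^ a * v ≡ 2 ^ b * v [MOD 2 ^ n + 1]) := by
      rw [htv, ← ZMod.natCast_eq_natCast_iff]
      push_cast
      rfl
    have h2 : ((2 : ZMod d) ^ a = 2 ^ b) ↔ (2 ^ a ≡ 2 ^ b [MOD d]) := by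
      rw [← ZMod.natCast_eq_natCast_iff]
      push_cast
      rfl
    rw [h1, h2]
    constructor
    · intro h
      have := h.cancel_right_div_gcd (m := 2 ^ n + 1) (by omega)
      rwa [← hg, ← hdd] at this
    · intro h
      have h' := (h.mul_right' g).mul_right u
      have e1 : d * g = 2 ^ n + 1 := by rw [hNd]; ring
      have e2 : ∀ x : ℕ, x * g * u = x * v := by intro x; rw [hvgu]; ring
      rwa [e1, e2, e2] at h'
  -- the unit 2 in ZMod d
  obtain ⟨U, hU⟩ : ∃ U : (ZMod d)ˣ, U = ZMod.unitOfCoprime 2 hco2 := ⟨_, rfl⟩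
  have hUc : ((U : ZMod d)) = 2 := by rw [hU, ZMod.coe_unitOfCoprime]; norm_num
  have hUpow : ∀ k : ℕ, ((U ^ k : (ZMod d)ˣ) : ZMod d) = 2 ^ k := by
    intro k; rw [Units.val_pow_eq_pow_val, hUc]
  -- 2^n = -1 in ZMod d
  have h2n : (2 : ZMod d) ^ n = -1 := by
    have : ((2 ^ n + 1 : ℕ) : ZMod d) = 0 :=
      (ZMod.natCast_eq_zero_iff _ d).2 hddvdN
    push_cast at this
    linear_combination this
  have h2n1 : (2 : ZMod d) ^ (2 * n) = 1 := by
    rw [pow_mul', h2n, neg_one_sq]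
  have hU2n : U ^ (2 * n) = 1 := by
    apply Units.ext
    rw [hUpow, h2n1, Units.val_one]
  -- the order of U is 2n
  have hr2n : orderOf U = 2 * n := by
    have hdvd : orderOf U ∣ 2 * n := orderOf_dvd_of_pow_eq_one hU2n
    have hndvd : ¬ orderOf U ∣ n := by
      intro h
      have h1 : U ^ n = 1 := orderOf_dvd_iff_pow_eq_one.1 h
      have h2 : (2 : ZMod d) ^ n = 1 := by rw [← hUpow, h1, Units.val_one]
      rw [h2n] at h2
      have h3 : ((2 : ℕ) : ZMod d) = 0 := by push_cast; linear_combination -h2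
      have h4 := (ZMod.natCast_eq_zero_iff 2 d).1 h3
      have := Nat.le_of_dvd (by omega) h4
      interval_cases d
      · exact hdodd (dvd_refl 2)
    have hdvd' : orderOf U ∣ 2 ^ (e + 1) := by
      rwa [he, ← pow_succ'] at hdvd
    obtain ⟨k, hk, hko⟩ := (Nat.dvd_prime_pow Nat.prime_two).1 hdvd'
    have hke : k = e + 1 := by
      by_contra hne
      exact hndvd (by rw [hko, he]; exact pow_dvd_pow 2 (by omega))
    rw [hko, hke, he, pow_succ']
  -- The orbit as a finset image
  have himg : {s : ZMod (2 ^ n + 1) | ∃ i : ℕ, s = 2 ^ i * t} =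
      ↑((Finset.range (2 * n)).image fun i => (2 : ZMod (2 ^ n + 1)) ^ i * t) := by
    ext s
    simp only [Set.mem_setOf_eq, Finset.coe_image, Set.mem_image, Finset.mem_coe,
      Finset.mem_range]
    constructor
    · rintro ⟨i, rfl⟩
      refine ⟨i % (2 * n), Nat.mod_lt _ (by omega), ?_⟩
      exact ((key i (i % (2 * n))).2 (pow_eq_pow_mod i h2n1)).symm
    · rintro ⟨i, _, rfl⟩
      exact ⟨i, rfl⟩
  rw [himg, Set.ncard_coe_finset]
  rw [Finset.card_image_of_injOn, Finset.card_range]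
  intro i hi j hj hij
  simp only [Finset.coe_range, Set.mem_Iio] at hi hj
  have h1 : (2 : ZMod d) ^ i = 2 ^ j := (key i j).1 hij
  have h2 : U ^ i = U ^ j := Units.ext (by rw [hUpow, hUpow]; exact h1)
  have h3 : i ≡ j [MOD 2 * n] := by
    have := pow_eq_pow_iff_modEq.1 h2
    rwa [hr2n] at this
  have := h3.eq_of_lt_of_lt hi hj
  exact this
end

section
/- Let p be a prime and n, i integers with 1 ≤ i ≤ n. Define r_{n,i} = p^n (p+1)^i (p^{n−i} − 1) / 2^{i+1}. Let Δ = {(a,b) : a, b nonnegative integers, a + b ≤ p^n − 2}, and let a_k, b_k denote the k-th p-adic digits of a and b. Then r_{n,i} is an integer, and r_{n,i} = #{(a,b) ∈ Δ : a_k + b_k ≥ p − 1 for all 0 ≤ k ≤ i − 1}. -/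
open Finset

private def Tri (M : ℕ) : Finset (ℕ × ℕ) :=
  (range M ×ˢ range M).filter fun ab => ab.1 + ab.2 + 2 ≤ M

private lemma tri_card (M : ℕ) : 2 * (Tri M).card = M * (M - 1) := by
  have h : (Tri M).card = ((range M).sigma fun a => range (M - 1 - a)).card := by
    apply Finset.card_nbij' (fun ab => ⟨ab.1, ab.2⟩) (fun x => (x.1, x.2))
    · intro a ha
      simp only [Finset.mem_coe, Tri, mem_filter, mem_product, mem_range] at ha
      simp only [Finset.mem_coe, mem_sigma, mem_range]
      omega
    · intro x hx
      simp only [Finset.mem_coe, mem_sigma, mem_range] at hx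
      simp only [Finset.mem_coe, Tri, mem_filter, mem_product, mem_range]
      omega
    · intro a _; rfl
    · intro x _; rfl
  rw [h, Finset.card_sigma]
  simp only [Finset.card_range]
  rw [Finset.sum_range_reflect (fun x => x) M]
  have := Finset.sum_range_id_mul_two M
  omega

private def DS (p i M : ℕ) : Finset (ℕ × ℕ) :=
  (range (p ^ i * M) ×ˢ range (p ^ i * M)).filter fun ab =>
    ab.1 + ab.2 + 2 ≤ p ^ i * M ∧ ∀ k < i, p - 1 ≤ ab.1 / p ^ k % p + ab.2 / p ^ k % p

private lemma DS_zero (p M : ℕ) : DS p 0 M = Tri M := by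
  simp [DS, Tri, Nat.not_lt_zero]

private lemma DS_succ (p : ℕ) (hp : 2 ≤ p) (i M : ℕ) :
    (DS p (i + 1) M).card =
      (((range p ×ˢ range p).filter fun xy => p - 1 ≤ xy.1 + xy.2) ×ˢ DS p i M).card := by
  have hp0 : 0 < p := by omega
  have hK : p ^ (i + 1) * M = p * (p ^ i * M) := by ring
  apply Finset.card_nbij' (fun ab => ((ab.1 % p, ab.2 % p), (ab.1 / p, ab.2 / p)))
    (fun x => (x.1.1 + p * x.2.1, x.1.2 + p * x.2.2))
  · intro ab hab
    obtain ⟨a, b⟩ := ab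
    simp only [Finset.mem_coe, DS, mem_filter, mem_product, mem_range, hK] at hab
    obtain ⟨⟨ha, hb⟩, hsum, hdig⟩ := hab
    have hd0 : p - 1 ≤ a % p + b % p := by simpa using hdig 0 (by omega)
    have ea : p * (a / p) + a % p = a := Nat.div_add_mod a p
    have eb : p * (b / p) + b % p = b := Nat.div_add_mod b p
    simp only [Finset.mem_coe, DS, mem_product, mem_filter, mem_range]
    refine ⟨⟨⟨Nat.mod_lt _ hp0, Nat.mod_lt _ hp0⟩, hd0⟩,
      ⟨⟨Nat.div_lt_of_lt_mul ha, Nat.div_lt_of_lt_mul hb⟩, ?_, ?_⟩⟩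
    · by_contra hcon
      push_neg at hcon
      have h2 : p * (p ^ i * M) ≤ p * (a / p + b / p + 1) := Nat.mul_le_mul_left _ (by omega)
      have h3 : p * (a / p + b / p + 1) = p * (a / p) + p * (b / p) + p := by ring
      have hp1 : p - 1 + 1 = p := by omega
      linarith
    · intro k hk
      have h := hdig (k + 1) (by omega)
      rw [pow_succ'] at h
      rw [Nat.div_div_eq_div_mul, Nat.div_div_eq_div_mul]
      exact h
  · intro x hx
    obtain ⟨⟨xa, xb⟩, a', b'⟩ := x
    simp only [Finset.mem_coe, DS, mem_product, mem_filter, mem_range] at hx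
    obtain ⟨⟨⟨hxa, hxb⟩, hdx⟩, ⟨ha', hb'⟩, hsum', hdig'⟩ := hx
    have ea : (xa + p * a') / p = a' := by
      rw [Nat.add_mul_div_left _ _ hp0, Nat.div_eq_of_lt hxa, zero_add]
    have eb : (xb + p * b') / p = b' := by
      rw [Nat.add_mul_div_left _ _ hp0, Nat.div_eq_of_lt hxb, zero_add]
    have ma : (xa + p * a') % p = xa := by
      rw [Nat.add_mul_mod_self_left, Nat.mod_eq_of_lt hxa]
    have mb : (xb + p * b') % p = xb := by
      rw [Nat.add_mul_mod_self_left, Nat.mod_eq_of_lt hxb]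
    simp only [Finset.mem_coe, DS, mem_filter, mem_product, mem_range, hK]
    have hlt1 : xa + p * a' < p * (p ^ i * M) := by
      have h2 : p * (a' + 1) ≤ p * (p ^ i * M) := Nat.mul_le_mul_left _ (by omega)
      have h3 : p * (a' + 1) = p * a' + p := by ring
      omega
    have hlt2 : xb + p * b' < p * (p ^ i * M) := by
      have h2 : p * (b' + 1) ≤ p * (p ^ i * M) := Nat.mul_le_mul_left _ (by omega)
      have h3 : p * (b' + 1) = p * b' + p := by ring
      omega
    refine ⟨⟨hlt1, hlt2⟩, ?_, ?_⟩
    · have h1 : p * (a' + b' + 2) ≤ p * (p ^ i * M) := Nat.mul_le_mul_left _ hsum'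
      have h3 : p * (a' + b' + 2) = p * a' + p * b' + p + p := by ring
      omega
    · intro k hk
      match k with
      | 0 => simpa [ma, mb] using hdx
      | Nat.succ k' =>
        rw [pow_succ', ← Nat.div_div_eq_div_mul, ← Nat.div_div_eq_div_mul, ea, eb]
        exact hdig' k' (by omega)
  · intro ab hab
    obtain ⟨a, b⟩ := ab
    simp only
    rw [Nat.mod_add_div a p, Nat.mod_add_div b p]
  · intro x hx
    obtain ⟨⟨xa, xb⟩, a', b'⟩ := x
    simp only [Finset.mem_coe, mem_product, mem_filter, mem_range] at hx
    obtain ⟨⟨⟨hxa, hxb⟩, _⟩, _⟩ := hx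
    simp only
    rw [Nat.add_mul_mod_self_left, Nat.mod_eq_of_lt hxa,
      Nat.add_mul_mod_self_left, Nat.mod_eq_of_lt hxb,
      Nat.add_mul_div_left _ _ hp0, Nat.div_eq_of_lt hxa,
      Nat.add_mul_div_left _ _ hp0, Nat.div_eq_of_lt hxb, zero_add, zero_add]

private lemma E_card (p : ℕ) (hp : 2 ≤ p) :
    2 * (((range p ×ˢ range p).filter fun xy => p - 1 ≤ xy.1 + xy.2)).card = p * (p + 1) := by
  classical
  have hpart := Finset.card_filter_add_card_filter_not
    (s := range p ×ˢ range p) (p := fun xy : ℕ × ℕ => p - 1 ≤ xy.1 + xy.2)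
  rw [Finset.card_product, Finset.card_range] at hpart
  have hneg : ((range p ×ˢ range p).filter fun xy : ℕ × ℕ => ¬ (p - 1 ≤ xy.1 + xy.2)) = Tri p := by
    unfold Tri
    refine Finset.filter_congr fun x hx => ?_
    omega
  rw [hneg] at hpart
  have ht := tri_card p
  have hps : p * (p - 1) + p + p = p * (p + 1) := by
    obtain ⟨q, rfl⟩ : ∃ q, p = q + 1 := ⟨p - 1, by omega⟩
    simp only [Nat.add_sub_cancel]
    ring
  linarith

private lemma DS_card (p : ℕ) (hp : 2 ≤ p) (i M : ℕ) :
    2 ^ (i + 1) * (DS p i M).card = (p * (p + 1)) ^ i * (M * (M - 1)) := by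
  induction i with
  | zero => simpa [DS_zero] using tri_card M
  | succ i ih =>
    rw [DS_succ p hp i M, Finset.card_product]
    have hE := E_card p hp
    calc 2 ^ (i + 1 + 1) *
          ((((range p ×ˢ range p).filter fun xy => p - 1 ≤ xy.1 + xy.2)).card * (DS p i M).card)
        = (2 * (((range p ×ˢ range p).filter fun xy => p - 1 ≤ xy.1 + xy.2)).card) *
            (2 ^ (i + 1) * (DS p i M).card) := by ring
      _ = (p * (p + 1)) * ((p * (p + 1)) ^ i * (M * (M - 1))) := by rw [hE, ih]
      _ = (p * (p + 1)) ^ (i + 1) * (M * (M - 1)) := by ring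

/-- Proposition 3.4 of the paper: r_{n,i} = p^n (p+1)^i (p^{n-i} - 1) / 2^{i+1}
is an integer and equals the number of pairs (a,b) in Δ all of whose first i
p-adic digit sums are at least p-1 (the rank of the i-th iterate of the
Cartier operator). -/
theorem stmt_14 (p n i : ℕ) (hp : p.Prime) (hi1 : 1 ≤ i) (hin : i ≤ n) :
    2 ^ (i + 1) ∣ p ^ n * (p + 1) ^ i * (p ^ (n - i) - 1) ∧
    ((Finset.range (p ^ n) ×ˢ Finset.range (p ^ n)).filter
        (fun ab : ℕ × ℕ => ab.1 + ab.2 ≤ p ^ n - 2 ∧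
          ∀ k < i, p - 1 ≤ ab.1 / p ^ k % p + ab.2 / p ^ k % p)).card
      = p ^ n * (p + 1) ^ i * (p ^ (n - i) - 1) / 2 ^ (i + 1) := by
  have hp2 : 2 ≤ p := hp.two_le
  set M := p ^ (n - i) with hM
  have hpn : p ^ i * M = p ^ n := by rw [hM, ← pow_add]; congr 1; omega
  have h2 : 2 ≤ p ^ n := le_trans hp2 (Nat.le_self_pow (by omega) p)
  have hset : DS p i M =
      (Finset.range (p ^ n) ×ˢ Finset.range (p ^ n)).filter
        (fun ab : ℕ × ℕ => ab.1 + ab.2 ≤ p ^ n - 2 ∧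
          ∀ k < i, p - 1 ≤ ab.1 / p ^ k % p + ab.2 / p ^ k % p) := by
    unfold DS
    rw [hpn]
    refine Finset.filter_congr fun ab hab => ?_
    exact and_congr_left' (by omega)
  have hcard := DS_card p hp2 i M
  have hRHS : p ^ n * (p + 1) ^ i * (p ^ (n - i) - 1) = (p * (p + 1)) ^ i * (M * (M - 1)) := by
    rw [← hpn, ← hM, mul_pow]; ring
  constructor
  · exact ⟨(DS p i M).card, by rw [hRHS, ← hcard]⟩
  · rw [← hset, hRHS, ← hcard]
    rw [Nat.mul_div_cancel_left _ (Nat.pow_pos (by omega))]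
end

section
/- Let n ≥ 1 and let T : (ℤ/2)^n → {1, ..., 2^n} be the bijection defined by T(b) = 2^{n−1}b₀ + ... + 2b_{n−2} + 1 if b_{n−1} = 1 and T(b) = 2^n − (2^{n−1}b₀ + ... + 2b_{n−2}) if b_{n−1} = 0. Define V on vectors with b_{n−1} = 1, b₀ = 1 by Vb = (b₁, ..., b_{n−2}, 0, 1), and on vectors with b_{n−1} = 0, b₀ = 0 by Vb = (1−b₁, ..., 1−b_{n−2}, 1, 1). Then whenever T(b) > 2^{n−1} (equivalently, b₀ = b_{n−1}), we have T(Vb) ≡ 2·T(b) (mod 2^n + 1). -/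
private lemma geomS (m : ℕ) : ∑ k ∈ Finset.range m, 2^(m-k) = 2^(m+1) - 2 := by
  induction m with
  | zero => simp
  | succ m ih =>
    rw [Finset.sum_range_succ']
    simp only [Nat.succ_sub_succ, Nat.sub_zero, ih]
    have h1 : 2^(m+1+1) = 2*2^(m+1) := by ring
    have h2 : 2 ≤ 2^(m+1) := by
      have := Nat.one_lt_two_pow (n := m+1) (by omega); omega
    omega

private lemma sumS (m : ℕ) (F : ℕ → ℕ) (c : Fin (m+2) → Fin 2)
    (hc : ∀ k : Fin (m+2), (c k : ℕ) = F ↑k) :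
    (∑ k : Fin (m+2), if (k : ℕ) < m+1 then 2 ^ (m+1 - (k : ℕ)) * ((c k : ℕ)) else 0)
      = ∑ k ∈ Finset.range (m+1), 2^(m+1-k) * F k := by
  have h1 : ∀ k : Fin (m+2), (if (k : ℕ) < m+1 then 2 ^ (m+1 - (k : ℕ)) * ((c k : ℕ)) else 0)
      = (fun i => if i < m+1 then 2^(m+1-i) * F i else 0) (k : ℕ) := by
    intro k; simp only [hc k]
  rw [Finset.sum_congr rfl (fun k _ => h1 k),
    Fin.sum_univ_eq_sum_range (fun i => if i < m+1 then 2^(m+1-i) * F i else 0) (m+2),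
    Finset.sum_range_succ]
  rw [if_neg (by omega), Nat.add_zero]
  exact Finset.sum_congr rfl fun i hi => if_pos (Finset.mem_range.mp hi)

private lemma fin2cases (x : Fin 2) : x = 0 ∨ x = 1 := by fin_cases x <;> simp

private lemma fin2sub (x : Fin 2) : ((1 - x : Fin 2) : ℕ) + (x : ℕ) = 1 := by
  fin_cases x <;> rfl

/-- The Verschiebung operation on binary vectors corresponds, via the bijection
T, to multiplication by 2 modulo 2^n + 1 whenever T(b) > 2^{n-1}. -/
theorem stmt_18 (n : ℕ) (hn : 1 ≤ n) (b : Fin n → Fin 2) :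
    let S : (Fin n → Fin 2) → ℕ := fun c =>
      ∑ k : Fin n, if (k : ℕ) < n - 1 then 2 ^ (n - 1 - (k : ℕ)) * ((c k : ℕ)) else 0
    let T : (Fin n → Fin 2) → ℕ := fun c =>
      if c ⟨n - 1, by omega⟩ = 1 then S c + 1 else 2 ^ n - S c
    let Vb : Fin n → Fin 2 := fun k =>
      if h1 : (k : ℕ) = n - 1 then 1
      else if h2 : (k : ℕ) = n - 2 then
        (if b ⟨n - 1, by omega⟩ = 1 then 0 else 1)
      else if b ⟨n - 1, by omega⟩ = 1 then
        b ⟨(k : ℕ) + 1, by have := k.isLt; omega⟩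
      else 1 - b ⟨(k : ℕ) + 1, by have := k.isLt; omega⟩
    2 ^ (n - 1) < T b → T Vb ≡ 2 * T b [MOD 2 ^ n + 1] := by
  intro S T Vb hT
  by_cases hone : n = 1
  · subst hone
    have hSb : S b = 0 := by
      show (∑ k : Fin 1, if (k : ℕ) < 1 - 1 then 2 ^ (1 - 1 - (k : ℕ)) * ((b k : ℕ)) else 0) = 0
      simp
    have hSV : S Vb = 0 := by
      show (∑ k : Fin 1, if (k : ℕ) < 1 - 1 then 2 ^ (1 - 1 - (k : ℕ)) * ((Vb k : ℕ)) else 0) = 0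
      simp
    have hVb0 : Vb ⟨0, by omega⟩ = 1 := rfl
    have hTV : T Vb = 1 := by
      show (if Vb ⟨1 - 1, by omega⟩ = 1 then S Vb + 1 else 2 ^ 1 - S Vb) = 1
      rw [if_pos hVb0, hSV]
    rcases fin2cases (b ⟨0, by omega⟩) with hb | hb
    · have hTb : T b = 2 := by
        show (if b ⟨1 - 1, by omega⟩ = 1 then S b + 1 else 2 ^ 1 - S b) = 2
        rw [if_neg (by rw [hb]; decide), hSb]; rfl
      rw [hTV, hTb]; decide
    · have hTb : T b = 1 := by
        show (if b ⟨1 - 1, by omega⟩ = 1 then S b + 1 else 2 ^ 1 - S b) = 1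
        rw [if_pos hb, hSb]
      exfalso
      rw [hTb] at hT
      simp at hT
  · obtain ⟨m, rfl⟩ : ∃ m, n = m + 2 := ⟨n - 2, by omega⟩

    have hT' : 2^(m+1) < T b := hT
    clear hT
    set lastIdx : Fin (m+2) := ⟨m+1, by omega⟩ with hlastIdx
    have eT : ∀ c : Fin (m+2) → Fin 2,
        T c = if c lastIdx = 1 then S c + 1 else 2^(m+2) - S c := fun c => rfl
    have eVb : ∀ (i : ℕ) (h : i < m+2), Vb ⟨i, h⟩ =
        (if h1 : i = m+1 then 1
         else if h2 : i = m then (if b lastIdx = 1 then 0 else 1)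
         else if b lastIdx = 1 then b ⟨i+1, by omega⟩
         else 1 - b ⟨i+1, by omega⟩ : Fin 2) := fun i h => rfl
    set F : ℕ → ℕ := fun i => if h : i < m+2 then (b ⟨i, h⟩ : ℕ) else 0 with hF
    set G : ℕ → ℕ := fun i => if h : i < m+2 then (Vb ⟨i, h⟩ : ℕ) else 0 with hG
    have hFle : ∀ i, F i ≤ 1 := by
      intro i; rw [hF]; dsimp only
      split
      · exact Nat.lt_succ_iff.mp (Fin.is_lt _)
      · exact Nat.zero_le 1
    have hSb : S b = ∑ k ∈ Finset.range (m+1), 2^(m+1-k) * F k := by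
      show (∑ k : Fin (m+2), if (k : ℕ) < m+2-1 then 2 ^ (m+2-1 - (k : ℕ)) * ((b k : ℕ)) else 0) = _
      exact sumS m F b (fun k => by rw [hF]; simp [k.isLt])
    have hSV : S Vb = ∑ k ∈ Finset.range (m+1), 2^(m+1-k) * G k := by
      show (∑ k : Fin (m+2), if (k : ℕ) < m+2-1 then 2 ^ (m+2-1 - (k : ℕ)) * ((Vb k : ℕ)) else 0) = _
      exact sumS m G Vb (fun k => by rw [hG]; simp [k.isLt])
    set A : ℕ := ∑ k ∈ Finset.range m, 2^(m-k) * F (k+1) with hA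
    have hSbA : S b = A + 2^(m+1) * F 0 := by
      rw [hSb, Finset.sum_range_succ']
      simp only [Nat.succ_sub_succ, Nat.sub_zero, hA]
    have hAle : A ≤ 2^(m+1) - 2 := by
      rw [hA]
      calc ∑ k ∈ Finset.range m, 2^(m-k) * F (k+1)
          ≤ ∑ k ∈ Finset.range m, 2^(m-k) := by
            apply Finset.sum_le_sum
            intro i _
            calc 2^(m-i) * F (i+1) ≤ 2^(m-i) * 1 :=
                  Nat.mul_le_mul_left _ (hFle _)
              _ = 2^(m-i) := Nat.mul_one _
        _ = 2^(m+1) - 2 := geomS m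
    have hpow : 2 ≤ 2^(m+1) := by
      have := Nat.one_lt_two_pow (n := m+1) (by omega); omega
    have hpow2 : 2^(m+2) = 2 * 2^(m+1) := by ring
    have hF0le : F 0 ≤ 1 := hFle 0
    have hVlast : Vb lastIdx = 1 := by rw [hlastIdx, eVb]; simp
    -- peel last term of S Vb
    have hSVpeel : S Vb = (∑ k ∈ Finset.range m, 2^(m+1-k) * G k) + 2 * G m := by
      rw [hSV, Finset.sum_range_succ]
      congr 2
      simp
    rcases fin2cases (b lastIdx) with hb | hb
    · -- b_{n-1} = 0 case
      have hbne : ¬ (b lastIdx = 1) := by rw [hb]; decide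
      have hGm : G m = 1 := by
        rw [hG]; dsimp only
        rw [dif_pos (by omega : m < m+2), eVb]
        rw [dif_neg (by omega), dif_pos rfl, if_neg hbne]; rfl
      have hGk : ∀ k, ∀ hk : k < m, G k = ((1 - b ⟨k+1, by omega⟩ : Fin 2) : ℕ) := by
        intro k hk
        rw [hG]; dsimp only
        rw [dif_pos (by omega : k < m+2), eVb]
        rw [dif_neg (by omega), dif_neg (by omega), if_neg hbne]
      have hFk : ∀ k, ∀ hk : k < m, F (k+1) = (b ⟨k+1, by omega⟩ : ℕ) := by
        intro k hk
        rw [hF]; dsimp only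
        rw [dif_pos (by omega : k+1 < m+2)]
      have hkey : (∑ k ∈ Finset.range m, 2^(m+1-k) * G k) + 2 * A = 2^(m+2) - 4 := by
        rw [hA, Finset.mul_sum, ← Finset.sum_add_distrib]
        have : ∀ k ∈ Finset.range m, 2^(m+1-k) * G k + 2 * (2^(m-k) * F (k+1))
            = 2^(m+1-k) := by
          intro k hk
          rw [Finset.mem_range] at hk
          rw [hGk k hk, hFk k hk]
          have h1 : 2 * (2^(m-k) * (b ⟨k+1, by omega⟩ : ℕ))
              = 2^(m+1-k) * (b ⟨k+1, by omega⟩ : ℕ) := by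
            rw [show m+1-k = (m-k)+1 by omega, pow_succ]; ring
          rw [h1, ← Nat.mul_add, fin2sub, Nat.mul_one]
        rw [Finset.sum_congr rfl this]
        -- ∑ k in range m, 2^(m+1-k) = 2^(m+2) - 4
        have : ∀ k ∈ Finset.range m, 2^(m+1-k) = 2 * 2^(m-k) := by
          intro k hk
          rw [Finset.mem_range] at hk
          rw [show m+1-k = (m-k)+1 by omega, pow_succ]; ring
        rw [Finset.sum_congr rfl this, ← Finset.mul_sum, geomS m]
        omega
      -- hT gives F 0 = 0
      have hTb : T b = 2^(m+2) - S b := by rw [eT, if_neg hbne]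
      have hF0 : F 0 = 0 := by
        rw [hTb, hSbA] at hT'
        by_contra h
        have : F 0 = 1 := by omega
        rw [this] at hT'
        omega
      have hTbv : T b = 2^(m+2) - A := by rw [hTb, hSbA, hF0]; ring_nf
      have hTVb : T Vb = (2^(m+2) - 4 - 2*A) + 2 + 1 := by
        rw [eT, if_pos hVlast, hSVpeel, hGm]
        have : (∑ k ∈ Finset.range m, 2^(m+1-k) * G k) = 2^(m+2) - 4 - 2*A := by omega
        rw [this]
      have key : 2 * T b = T Vb + (2^(m+2)+1) := by
        rw [hTbv, hTVb]
        omega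
      show T Vb % (2^(m+2)+1) = (2 * T b) % (2^(m+2)+1)
      rw [key, Nat.add_mod_right]
    · -- b_{n-1} = 1 case
      have hGm : G m = 0 := by
        rw [hG]; dsimp only
        rw [dif_pos (by omega : m < m+2), eVb]
        rw [dif_neg (by omega), dif_pos rfl, if_pos hb]; rfl
      have hGk : ∀ k, k < m → G k = F (k+1) := by
        intro k hk
        rw [hG, hF]; dsimp only
        rw [dif_pos (by omega : k < m+2), eVb]
        rw [dif_neg (by omega), dif_neg (by omega), if_pos hb,
          dif_pos (by omega : k+1 < m+2)]
      have hSVv : S Vb = 2 * A := by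
        rw [hSVpeel, hGm, Nat.mul_zero, Nat.add_zero, hA, Finset.mul_sum]
        apply Finset.sum_congr rfl
        intro k hk
        rw [Finset.mem_range] at hk
        rw [hGk k hk, show m+1-k = (m-k)+1 by omega, pow_succ]; ring
      have hTb : T b = S b + 1 := by rw [eT, if_pos hb]
      have hF0 : F 0 = 1 := by
        rw [hTb, hSbA] at hT'
        by_contra h
        have : F 0 = 0 := by omega
        rw [this] at hT'
        omega
      have hTbv : T b = A + 2^(m+1) + 1 := by rw [hTb, hSbA, hF0]; ring_nf
      have hTVb : T Vb = 2*A + 1 := by rw [eT, if_pos hVlast, hSVv]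
      have key : 2 * T b = T Vb + (2^(m+2)+1) := by
        rw [hTbv, hTVb]; omega
      show T Vb % (2^(m+2)+1) = (2 * T b) % (2^(m+2)+1)
      rw [key, Nat.add_mod_right]
end
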